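/- arXiv:2203.14410 — 3 statements merged into one kernel-verified Lean document; each statement's English description precedes it below -/
import Mathlib

section
/- Let u : ℝ × ℝ³ → ℝ³ be a velocity field continuously differentiable in all variables, and let η be a flow map for u that is twice continuously differentiable in all variables and satisfies the group law. Fix s ∈ ℝ and let X_s : ℝ³ → ℝ³ be continuously differentiable. Define the pushforward X(t,x) := (D_x η(s,t;·))(η(t,s;x)) (X_s(η(t,s;x))). Then X satisfies ∂_t X + u·∇X − X·∇u = 0 on ℝ × ℝ³; that is, the pushforward of a vector field by the flow is Lie-transported by the flow. -/
noncomputable section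

local notation "E3" => EuclideanSpace ℝ (Fin 3)

/-! Fix `t, x` and put `y = η(t,s;x)`, `v = X_s(y)`. By the group law `η(t',s;η(t,t';x)) = y` for
all `t'`, so along the flow line through `x` the pushforward is `X(t', η(t,t';x)) = D_zη(s,t';y) v`.
Differentiating in `t'` at `t`, the chain rule gives `∂_t X + u·∇X` on the left, while on the right
the symmetry of second derivatives of the `C²` map `(t',z) ↦ η(s,t';z)` turns `∂_{t'} D_z η` into
`D_z ∂_{t'} η = D_z [u(t, η(s,t;·))]`, which at `y` applied to `v` is `X·∇u`. -/

open Function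

section PartialDerivatives

variable {𝕜 E F : Type*} [NontriviallyNormedField 𝕜]
  [NormedAddCommGroup E] [NormedSpace 𝕜 E] [NormedAddCommGroup F] [NormedSpace 𝕜 F]
  {f : 𝕜 → E → F} {L : 𝕜 × E →L[𝕜] F} {t : 𝕜} {x : E}

theorem HasFDerivAt.hasDerivAt_uncurry_left (hf : HasFDerivAt (uncurry f) L (t, x)) :
    HasDerivAt (fun t' => f t' x) (L (1, 0)) t :=
  (hf.comp_hasDerivAt t ((hasDerivAt_id t).prodMk (hasDerivAt_const t x)) :)

theorem HasFDerivAt.hasFDerivAt_uncurry_right (hf : HasFDerivAt (uncurry f) L (t, x)) :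
    HasFDerivAt (f t) (L.comp (ContinuousLinearMap.inr 𝕜 𝕜 E)) x :=
  hf.comp x (hasFDerivAt_prodMk_right t x)

theorem DifferentiableAt.hasDerivAt_uncurry_comp_curve {c : 𝕜 → E} {w : E}
    (hf : DifferentiableAt 𝕜 (uncurry f) (t, c t)) (hc : HasDerivAt c w t) :
    HasDerivAt (fun t' => f t' (c t'))
      (deriv (fun t' => f t' (c t)) t + fderiv 𝕜 (f t) (c t) w) t := by
  have hL := hf.hasFDerivAt
  rw [hL.hasDerivAt_uncurry_left.deriv, hL.hasFDerivAt_uncurry_right.fderiv]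
  refine (hL.comp_hasDerivAt t ((hasDerivAt_id t).prodMk hc) :).congr_deriv ?_
  rw [ContinuousLinearMap.comp_apply, ContinuousLinearMap.inr_apply, ← map_add,
    Prod.mk_add_mk, add_zero, zero_add]

theorem hasDerivAt_fderiv_uncurry_apply [IsRCLikeNormedField 𝕜] {y : E}
    (hf : Differentiable 𝕜 (uncurry f))
    (hf' : DifferentiableAt 𝕜 (fderiv 𝕜 (uncurry f)) (t, y)) (v : E) :
    HasDerivAt (fun t' => fderiv 𝕜 (f t') y v)
      (fderiv 𝕜 (fun z => deriv (fun t' => f t' z) t) y v) t := by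
  set B := fderiv 𝕜 (fderiv 𝕜 (uncurry f)) (t, y)
  have hB : HasFDerivAt (uncurry fun (t' : 𝕜) (z : E) => fderiv 𝕜 (uncurry f) (t', z)) B (t, y) :=
    hf'.hasFDerivAt
  have hspace : (fun t' => fderiv 𝕜 (f t') y v) = fun t' => fderiv 𝕜 (uncurry f) (t', y) (0, v) :=
    funext fun t' => by rw [(hf _).hasFDerivAt.hasFDerivAt_uncurry_right.fderiv]; rfl
  have htime : (fun z => deriv (fun t' => f t' z) t)
      = fun z => fderiv 𝕜 (uncurry f) (t, z) (1, 0) :=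
    funext fun z => (hf _).hasFDerivAt.hasDerivAt_uncurry_left.deriv
  have hdt : HasDerivAt (fun t' => fderiv 𝕜 (uncurry f) (t', y) (0, v)) (B (1, 0) (0, v)) t :=
    hB.hasDerivAt_uncurry_left.clm_apply (hasDerivAt_const t _) |>.congr_deriv (by simp)
  have hdz : HasFDerivAt (fun z => fderiv 𝕜 (uncurry f) (t, z) (1, 0))
      ((ContinuousLinearMap.apply 𝕜 F ((1 : 𝕜), (0 : E))).comp
        (B.comp (ContinuousLinearMap.inr 𝕜 𝕜 E))) y :=
    ((ContinuousLinearMap.apply 𝕜 F _).hasFDerivAt.comp y hB.hasFDerivAt_uncurry_right :)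
  rw [hspace, htime, hdz.fderiv]
  refine hdt.congr_deriv ?_
  simp only [ContinuousLinearMap.comp_apply, ContinuousLinearMap.apply_apply,
    ContinuousLinearMap.inr_apply]
  exact second_derivative_symmetric (fun p => (hf p).hasFDerivAt) hf'.hasFDerivAt _ _

end PartialDerivatives

/-- The pushforward `X(t,x) := (D_x η(s,t;·))(η(t,s;x)) (X_s(η(t,s;x)))` of a `C¹` vector
field `X_s` by a `C²` flow map `η` of a `C¹` velocity field `u` satisfying the group law
is Lie-transported by the flow: `∂_t X + u·∇X − X·∇u = 0` on `ℝ × ℝ³`. -/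
theorem pushforward_is_lie_transported
    (u : ℝ × E3 → E3) (η : ℝ → ℝ → E3 → E3)
    (hu : ContDiff ℝ 1 u)
    (hη : ContDiff ℝ 2 (fun p : ℝ × ℝ × E3 => η p.1 p.2.1 p.2.2))
    (hflow : ∀ t₁ t₂ x, HasDerivAt (fun s => η t₁ s x) (u (t₂, η t₁ t₂ x)) t₂)
    (hid : ∀ t x, η t t x = x)
    (hgroup : ∀ t₁ t₂ t₃ x, η t₂ t₃ (η t₁ t₂ x) = η t₁ t₃ x)
    (s : ℝ) (Xs : E3 → E3) (hXs : ContDiff ℝ 1 Xs)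
    (X : ℝ → E3 → E3)
    (hX : ∀ t x, X t x
      = fderiv ℝ (fun y => η s t y) (η t s x) (Xs (η t s x))) :
    ∀ (t : ℝ) (x : E3),
      deriv (fun t' => X t' x) t
        + fderiv ℝ (fun y => X t y) x (u (t, x))
        - fderiv ℝ (fun y => u (t, y)) x (X t x) = 0 := by
  intro t x
  set y := η t s x
  have hforward : ContDiff ℝ 2 (uncurry (η s)) := hη.comp (contDiff_const.prodMk contDiff_id)
  have hbackward : ContDiff ℝ 1 (fun p : ℝ × E3 => η p.1 s p.2) :=
    (hη.comp (contDiff_fst.prodMk (contDiff_const.prodMk contDiff_snd))).of_le one_le_two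
  have hXC : ContDiff ℝ 1 (uncurry X) := by
    rw [show uncurry X = _ from funext fun p => hX p.1 p.2]
    exact ((hforward.comp (contDiff_fst.fst.prodMk contDiff_snd)).fderiv hbackward
      le_rfl).clm_apply (hXs.comp hbackward)
  have hcurve : HasDerivAt (fun t' => η t t' x) (u (t, x)) t := by
    simpa only [hid] using hflow t t x
  have hmaterial := (hXC.differentiable one_ne_zero _).hasDerivAt_uncurry_comp_curve hcurve
  rw [hid] at hmaterial
  have hline : (fun t' => X t' (η t t' x)) = fun t' => fderiv ℝ (η s t') y (Xs y) :=
    funext fun t' => by rw [hX, hgroup]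
  have hswap := hasDerivAt_fderiv_uncurry_apply (hforward.differentiable two_ne_zero)
    ((hforward.fderiv_right le_rfl).differentiable one_ne_zero (t, y)) (Xs y)
  have hvelocity : (fun z => deriv (fun t' => η s t' z) t) = fun z => u (t, η s t z) :=
    funext fun z => (hflow s t z).deriv
  have hyx : η s t y = x := by rw [hgroup, hid]
  have hchain : fderiv ℝ (fun z => u (t, η s t z)) y
      = (fderiv ℝ (fun w => u (t, w)) x).comp (fderiv ℝ (η s t) y) := by
    rw [← hyx]
    exact fderiv_fun_comp y
      ((hu.differentiable one_ne_zero).comp (differentiable_const t |>.prodMk differentiable_id) _)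
      ((hforward.differentiable two_ne_zero).comp (differentiable_const t |>.prodMk differentiable_id) y)
  rw [hvelocity, hchain, ← hline] at hswap
  rw [sub_eq_zero, hX t x]
  exact hmaterial.unique hswap
end
end

section
/- Let u : ℝ × ℝ³ → ℝ³ be a velocity field continuously differentiable in all variables, and let η be a flow map for u that is twice continuously differentiable in all variables and satisfies the group law. Let O ⊆ ℝ × ℝ³ be open, and let τ : O → ℝ and γ : O → ℝ³ be continuously differentiable maps which are constant along flow lines, i.e., whenever (s,x) ∈ O and (t, η(s,t;x)) ∈ O one has τ(t, η(s,t;x)) = τ(s,x) and γ(t, η(s,t;x)) = γ(s,x), and which satisfy η(τ(t,x), t; γ(t,x)) = x for all (t,x) ∈ O. Let H : ℝ × ℝ³ → ℝ³ be continuously differentiable. Define X(t,x) := (D_x η(τ(t,x), t; ·))(γ(t,x)) (H(τ(t,x), γ(t,x))) on O. Then ∂_t X + u·∇X − X·∇u = 0 on O; that is, the pushforward of boundary data along the flow is Lie-transported by the flow. -/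
/-!
Fix `(t, x) ∈ O` and put `τ₀ = τ(t,x)`, `γ₀ = γ(t,x)`, `H₀ = H(τ₀,γ₀)`. Since `τ` and `γ` are
constant along the flow line `s ↦ (s, η(t,s;x))`, on it `X(s, η(t,s;x)) = D_y η(τ₀,s;γ₀) H₀`.
Differentiating at `s = t`, the chain rule gives `∂_t X + u·∇X` on the left. On the right, `η` is
`C²`, so the mixed partials commute and `∂_s D_y η = D_y ∂_s η = D_y (u(s, η)) = D_x u · D_y η`,
which applied to `H₀` is `X·∇u` because `η(τ₀,t;γ₀) = x`.
-/

noncomputable section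

local notation "E3" => EuclideanSpace ℝ (Fin 3)

open Filter Topology

section

variable {P E F : Type*} [NormedAddCommGroup P] [NormedSpace ℝ P] [NormedAddCommGroup E]
  [NormedSpace ℝ E] [NormedAddCommGroup F] [NormedSpace ℝ F]

theorem HasFDerivAt.hasDerivAt_partial_fst {f : ℝ × E → F} {f' : ℝ × E →L[ℝ] F} {t : ℝ} {x : E}
    (hf : HasFDerivAt f f' (t, x)) : HasDerivAt (fun s => f (s, x)) (f' (1, 0)) t :=
  hf.comp_hasDerivAt t ((hasDerivAt_id t).prodMk (hasDerivAt_const t x))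

theorem HasFDerivAt.hasFDerivAt_partial_snd {f : ℝ × E → F} {f' : ℝ × E →L[ℝ] F} {t : ℝ} {x : E}
    (hf : HasFDerivAt f f' (t, x)) :
    HasFDerivAt (fun y => f (t, y)) (f'.comp (ContinuousLinearMap.inr ℝ ℝ E)) x :=
  hf.comp x (hasFDerivAt_prodMk_right t x)

theorem HasFDerivAt.deriv_partial_fst_add_fderiv_partial_snd {f : ℝ × E → F}
    {f' : ℝ × E →L[ℝ] F} {t : ℝ} {x : E} (hf : HasFDerivAt f f' (t, x)) (w : E) :
    deriv (fun s => f (s, x)) t + fderiv ℝ (fun y => f (t, y)) x w = f' (1, w) := by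
  rw [hf.hasDerivAt_partial_fst.deriv, hf.hasFDerivAt_partial_snd.fderiv,
    ContinuousLinearMap.comp_apply, ← map_add]
  simp

theorem ContDiffAt.hasDerivAt_fderiv_partial_snd {f : ℝ × E → F} {t : ℝ} {y : E}
    (hf : ContDiffAt ℝ 2 f (t, y)) (v : E) :
    HasDerivAt (fun s => fderiv ℝ (fun z => f (s, z)) y v)
      (fderiv ℝ (fun z => deriv (fun s => f (s, z)) t) y v) t := by
  set f'' := fderiv ℝ (fderiv ℝ f) (t, y)
  have hf'' : HasFDerivAt (fderiv ℝ f) f'' (t, y) :=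
    ((hf.fderiv_right le_rfl).differentiableAt one_ne_zero).hasFDerivAt
  have hf' : ∀ᶠ p in 𝓝 (t, y), HasFDerivAt f (fderiv ℝ f p) p :=
    (hf.eventually (by simp)).mono fun p hp => (hp.differentiableAt two_ne_zero).hasFDerivAt
  have htime : (fun s => fderiv ℝ (fun z => f (s, z)) y v) =ᶠ[𝓝 t]
      fun s => fderiv ℝ f (s, y) (0, v) :=
    ((Continuous.prodMk_left y).continuousAt.eventually hf').mono fun s hs =>
      DFunLike.congr_fun hs.hasFDerivAt_partial_snd.fderiv v
  have hspace : (fun z => deriv (fun s => f (s, z)) t) =ᶠ[𝓝 y]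
      fun z => fderiv ℝ f (t, z) (1, 0) :=
    ((Continuous.prodMk_right t).continuousAt.eventually hf').mono fun z hz =>
      hz.hasDerivAt_partial_fst.deriv
  have hspace' : HasFDerivAt (fun z => fderiv ℝ f (t, z) (1, 0))
      ((ContinuousLinearMap.apply ℝ F ((1 : ℝ), (0 : E))).comp
        (f''.comp (ContinuousLinearMap.inr ℝ ℝ E))) y :=
    (ContinuousLinearMap.apply ℝ F ((1 : ℝ), (0 : E))).hasFDerivAt.comp y
      hf''.hasFDerivAt_partial_snd
  rw [hspace.fderiv_eq, hspace'.fderiv]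
  have hsymm : f'' (0, v) (1, 0) = f'' (1, 0) (0, v) := hf.isSymmSndFDerivAt (by simp) _ _
  refine HasDerivAt.congr_of_eventuallyEq ?_ htime
  show HasDerivAt _ (f'' (0, v) (1, 0)) t
  rw [hsymm]
  exact (ContinuousLinearMap.apply ℝ F ((0 : ℝ), v)).hasFDerivAt.comp_hasDerivAt t
    hf''.hasDerivAt_partial_fst

theorem ContDiffAt.hasDerivAt_fderiv_partial_snd_of_flow {Φ : ℝ × E → F} {w : F → F}
    {t : ℝ} {y : E} (hΦ : ContDiffAt ℝ 2 Φ (t, y))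
    (hflow : ∀ᶠ z in 𝓝 y, HasDerivAt (fun s => Φ (s, z)) (w (Φ (t, z))) t)
    (hw : DifferentiableAt ℝ w (Φ (t, y))) (v : E) :
    HasDerivAt (fun s => fderiv ℝ (fun z => Φ (s, z)) y v)
      (fderiv ℝ w (Φ (t, y)) (fderiv ℝ (fun z => Φ (t, z)) y v)) t := by
  have hdt : (fun z => deriv (fun s => Φ (s, z)) t) =ᶠ[𝓝 y] w ∘ fun z => Φ (t, z) :=
    hflow.mono fun z hz => hz.deriv
  have hΦt : DifferentiableAt ℝ (fun z => Φ (t, z)) y :=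
    (hΦ.differentiableAt two_ne_zero).hasFDerivAt.hasFDerivAt_partial_snd.differentiableAt
  have hchain := hw.hasFDerivAt.comp y hΦt.hasFDerivAt
  convert hΦ.hasDerivAt_fderiv_partial_snd v using 1
  rw [hdt.fderiv_eq, hchain.fderiv]
  rfl

theorem contDiffAt_fderiv_apply_of_contDiff {η : ℝ → ℝ → E → F} {m n : WithTop ℕ∞}
    (hη : ContDiff ℝ m fun q : ℝ × ℝ × E => η q.1 q.2.1 q.2.2) (hnm : n + 1 ≤ m)
    {a b : P → ℝ} {c v : P → E} {p : P} (ha : ContDiffAt ℝ n a p) (hb : ContDiffAt ℝ n b p)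
    (hc : ContDiffAt ℝ n c p) (hv : ContDiffAt ℝ n v p) :
    ContDiffAt ℝ n (fun p => fderiv ℝ (η (a p) (b p)) (c p) (v p)) p := by
  have hη' : ContDiff ℝ m (Function.uncurry fun q : ℝ × ℝ × E => η q.1 q.2.1) :=
    hη.comp (by fun_prop : ContDiff ℝ m fun r : (ℝ × ℝ × E) × E => (r.1.1, r.1.2.1, r.2))
  have hfderiv : ContDiff ℝ n fun q : ℝ × ℝ × E => fderiv ℝ (η q.1 q.2.1) q.2.2 :=
    hη'.fderiv contDiff_snd.snd hnm
  exact (hfderiv.contDiffAt.comp p (ha.prodMk (hb.prodMk hc))).clm_apply hv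

end

theorem pushforward_of_boundary_data_is_lie_transported_general
    (u : ℝ × E3 → E3) (hu : ContDiff ℝ 1 u)
    (η : ℝ → ℝ → E3 → E3)
    (hη : ContDiff ℝ 2 (fun p : ℝ × ℝ × E3 => η p.1 p.2.1 p.2.2))
    (hflow : ∀ t₁ t₂ x, HasDerivAt (fun s => η t₁ s x) (u (t₂, η t₁ t₂ x)) t₂)
    (hid : ∀ t x, η t t x = x)
    (O : Set (ℝ × E3)) (hO : IsOpen O)
    (τ : ℝ × E3 → ℝ) (γ : ℝ × E3 → E3)
    (hτ : ContDiffOn ℝ 1 τ O) (hγ : ContDiffOn ℝ 1 γ O)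
    (hconst : ∀ (s : ℝ) (x : E3) (t : ℝ), (s, x) ∈ O → (t, η s t x) ∈ O →
      τ (t, η s t x) = τ (s, x) ∧ γ (t, η s t x) = γ (s, x))
    (hrel : ∀ p ∈ O, η (τ p) p.1 (γ p) = p.2)
    (H : ℝ × E3 → E3) (hH : ContDiff ℝ 1 H)
    (X : ℝ → E3 → E3)
    (hX : ∀ t x, X t x
      = fderiv ℝ (fun y => η (τ (t, x)) t y) (γ (t, x)) (H (τ (t, x), γ (t, x)))) :
    ∀ (t : ℝ) (x : E3), (t, x) ∈ O →
      deriv (fun t' => X t' x) t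
        + fderiv ℝ (fun y => X t y) x (u (t, x))
        - fderiv ℝ (fun y => u (t, y)) x (X t x) = 0 := by
  intro t x hmem
  set τ₀ := τ (t, x)
  set γ₀ := γ (t, x)
  set H₀ := H (τ₀, γ₀)
  set Xt : ℝ × E3 → E3 := fun p => fderiv ℝ (η (τ p) p.1) (γ p) (H (τ p, γ p))
  have hXt : X = fun s y => Xt (s, y) := funext₂ hX
  have hτt := hτ.contDiffAt (hO.mem_nhds hmem)
  have hγt := hγ.contDiffAt (hO.mem_nhds hmem)
  obtain ⟨L, hL⟩ : DifferentiableAt ℝ Xt (t, x) :=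
    (contDiffAt_fderiv_apply_of_contDiff hη (by norm_num) hτt contDiffAt_fst hγt
      (hH.contDiffAt.comp _ (hτt.prodMk hγt))).differentiableAt one_ne_zero
  have hline : HasDerivAt (fun s => (s, η t s x)) (1, u (t, x)) t := by
    simpa only [hid] using (hasDerivAt_id' t).prodMk (hflow t t x)
  have hon : ∀ᶠ s in 𝓝 t, (s, η t s x) ∈ O :=
    hline.continuousAt.preimage_mem_nhds (by rw [hid]; exact hO.mem_nhds hmem)
  have htransport : (fun s => fderiv ℝ (η τ₀ s) γ₀ H₀) =ᶠ[𝓝 t] fun s => Xt (s, η t s x) :=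
    hon.mono fun s hs => by
      obtain ⟨hτs, hγs⟩ := hconst t x s hmem hs
      simp only [Xt, hτs, hγs]
      rfl
  have hvar := ((hη.contDiffAt).comp (t, γ₀) (contDiffAt_const.prodMk contDiffAt_id)
    ).hasDerivAt_fderiv_partial_snd_of_flow (Φ := Function.uncurry (η τ₀))
      (w := fun z => u (t, z))
      (Eventually.of_forall fun z => hflow τ₀ t z)
      ((hu.comp (contDiff_const.prodMk contDiff_id)).differentiable one_ne_zero _) H₀
  have hkey : L (1, u (t, x)) = fderiv ℝ (fun y => u (t, y)) x (Xt (t, x)) := by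
    have hL' : HasFDerivAt Xt L (t, η t t x) := by rwa [hid]
    rw [((hL'.comp_hasDerivAt t hline).congr_of_eventuallyEq htransport).unique hvar]
    exact congrArg (fderiv ℝ _ · _) (hrel (t, x) hmem)
  rw [hXt, hL.deriv_partial_fst_add_fderiv_partial_snd, hkey]
  exact sub_self _

/-- The pushforward `X(t,x) := (D_x η(τ(t,x),t;·))(γ(t,x)) (H(τ(t,x),γ(t,x)))` of
boundary data `H` along the flow, where `τ` and `γ` are `C¹` on an open set `O`, constant
along flow lines, and satisfy `η(τ(t,x),t;γ(t,x)) = x`, is Lie-transported by the flow: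
`∂_t X + u·∇X − X·∇u = 0` on `O`. -/
theorem pushforward_of_boundary_data_is_lie_transported
    (u : ℝ × E3 → E3) (hu : ContDiff ℝ 1 u)
    (η : ℝ → ℝ → E3 → E3)
    (hη : ContDiff ℝ 2 (fun p : ℝ × ℝ × E3 => η p.1 p.2.1 p.2.2))
    (hflow : ∀ t₁ t₂ x, HasDerivAt (fun s => η t₁ s x) (u (t₂, η t₁ t₂ x)) t₂)
    (hid : ∀ t x, η t t x = x)
    (hgroup : ∀ t₁ t₂ t₃ x, η t₂ t₃ (η t₁ t₂ x) = η t₁ t₃ x)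
    (O : Set (ℝ × E3)) (hO : IsOpen O)
    (τ : ℝ × E3 → ℝ) (γ : ℝ × E3 → E3)
    (hτ : ContDiffOn ℝ 1 τ O) (hγ : ContDiffOn ℝ 1 γ O)
    (hconst : ∀ (s : ℝ) (x : E3) (t : ℝ), (s, x) ∈ O → (t, η s t x) ∈ O →
      τ (t, η s t x) = τ (s, x) ∧ γ (t, η s t x) = γ (s, x))
    (hrel : ∀ p ∈ O, η (τ p) p.1 (γ p) = p.2)
    (H : ℝ × E3 → E3) (hH : ContDiff ℝ 1 H)
    (X : ℝ → E3 → E3)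
    (hX : ∀ t x, X t x
      = fderiv ℝ (fun y => η (τ (t, x)) t y) (γ (t, x)) (H (τ (t, x), γ (t, x)))) :
    ∀ (t : ℝ) (x : E3), (t, x) ∈ O →
      deriv (fun t' => X t' x) t
        + fderiv ℝ (fun y => X t y) x (u (t, x))
        - fderiv ℝ (fun y => u (t, y)) x (X t x) = 0 :=
  pushforward_of_boundary_data_is_lie_transported_general u hu η hη hflow hid O hO τ γ hτ hγ hconst
    hrel H hH X hX
end
end

section
/- Let u : ℝ × ℝ³ → ℝ³ be continuous and let η : ℝ × ℝ × ℝ³ → ℝ³ be continuously differentiable in all variables and satisfy ∂_{t₂}η(t₁,t₂;x) = u(t₂, η(t₁,t₂;x)) for all t₁,t₂,x. Let O ⊆ ℝ × ℝ³ be open and let τ : O → ℝ, γ : O → ℝ³ be differentiable with η(t, τ(t,x); x) = γ(t,x) on O. Fix (t,x) ∈ O and a vector ν ∈ ℝ³ such that ν · (Dγ(t,x) w) = 0 for every w ∈ ℝ × ℝ³ (Dγ the full Fréchet derivative of γ at (t,x)) and u(τ(t,x), γ(t,x)) · ν ≠ 0. Then for every w ∈ ℝ × ℝ³, (Dτ(t,x))(w)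 = − (ν · (A w)) / (u(τ(t,x), γ(t,x)) · ν), where A is the Fréchet derivative at (t,x) of the map (t',x') ↦ η(t', s; x') with the middle argument frozen at s = τ(t,x). -/
noncomputable section

open scoped RealInnerProductSpace

local notation "E3" => EuclideanSpace ℝ (Fin 3)

/-!
Differentiating `η(t, τ(t,x); x) = γ(t,x)` by the chain rule, and using that the partial
derivative of `η` in its middle slot is the velocity `u`, gives
`Dγ w = A w + (Dτ w) • u(τ, γ)`. Pairing with `ν` kills the left side, and since
`u(τ, γ) · ν ≠ 0` this can be solved for `Dτ w`.
-/

section MiddleSlot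

variable {E F G : Type*} [NormedAddCommGroup E] [NormedSpace ℝ E]
  [NormedAddCommGroup F] [NormedSpace ℝ F] [NormedAddCommGroup G] [NormedSpace ℝ G]

theorem fderiv_comp_middle_apply {H : E × ℝ × F → G} {τ : E × F → ℝ} {p : E × F} {v : G}
    (hH : DifferentiableAt ℝ H (p.1, τ p, p.2)) (hτ : DifferentiableAt ℝ τ p)
    (hv : HasDerivAt (fun c => H (p.1, c, p.2)) v (τ p)) (w : E × F) :
    fderiv ℝ (fun q => H (q.1, τ q, q.2)) p w
      = fderiv ℝ (fun q => H (q.1, τ p, q.2)) p w + fderiv ℝ τ p w • v := by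
  set L := fderiv ℝ H (p.1, τ p, p.2)
  have hL : HasFDerivAt H L (p.1, τ p, p.2) := hH.hasFDerivAt
  have hmiddle : L (0, 1, 0) = v :=
    (hL.comp_hasDerivAt (τ p) ((hasDerivAt_const _ p.1).prodMk
      ((hasDerivAt_id _).prodMk (hasDerivAt_const _ p.2)))).unique hv
  have hmoving : HasFDerivAt (fun q => H (q.1, τ q, q.2))
      (L.comp ((ContinuousLinearMap.fst ℝ E F).prod
        ((fderiv ℝ τ p).prod (ContinuousLinearMap.snd ℝ E F)))) p :=
    hL.comp p (hasFDerivAt_fst.prodMk (hτ.hasFDerivAt.prodMk hasFDerivAt_snd))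
  have hfrozen : HasFDerivAt (fun q => H (q.1, τ p, q.2))
      (L.comp ((ContinuousLinearMap.fst ℝ E F).prod
        ((0 : E × F →L[ℝ] ℝ).prod (ContinuousLinearMap.snd ℝ E F)))) p :=
    hL.comp p (hasFDerivAt_fst.prodMk ((hasFDerivAt_const _ _).prodMk hasFDerivAt_snd))
  have hsplit : ((w.1, fderiv ℝ τ p w, w.2) : E × ℝ × F)
      = (w.1, 0, w.2) + fderiv ℝ τ p w • ((0 : E), (1 : ℝ), (0 : F)) := by
    simp
  rw [hmoving.fderiv, hfrozen.fderiv, ← hmiddle]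
  simp only [ContinuousLinearMap.comp_apply, ContinuousLinearMap.prod_apply,
    ContinuousLinearMap.coe_fst', ContinuousLinearMap.coe_snd', zero_apply]
  rw [hsplit, map_add, map_smul]

end MiddleSlot

theorem eq_neg_inner_div_of_inner_add_smul_eq_zero {V : Type*} [NormedAddCommGroup V]
    [InnerProductSpace ℝ V] {ν a v : V} {c : ℝ} (h : ⟪ν, a + c • v⟫ = 0) (hv : ⟪v, ν⟫ ≠ 0) :
    c = -⟪ν, a⟫ / ⟪v, ν⟫ := by
  rw [inner_add_right, inner_smul_right, real_inner_comm v] at h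
  rw [eq_div_iff hv]
  linarith

theorem derivative_of_tau_formula_general
    (u : ℝ × E3 → E3)
    (η : ℝ → ℝ → E3 → E3)
    (hη : ContDiff ℝ 1 (fun p : ℝ × ℝ × E3 => η p.1 p.2.1 p.2.2))
    (hflow : ∀ t₁ t₂ x, HasDerivAt (fun s => η t₁ s x) (u (t₂, η t₁ t₂ x)) t₂)
    (O : Set (ℝ × E3)) (hO : IsOpen O)
    (τ : ℝ × E3 → ℝ) (γ : ℝ × E3 → E3)
    (hτ : ∀ p ∈ O, DifferentiableAt ℝ τ p)
    (hrel : ∀ p ∈ O, η p.1 (τ p) p.2 = γ p)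
    (t : ℝ) (x : E3) (hp : (t, x) ∈ O)
    (ν : E3)
    (hν : ∀ w : ℝ × E3, ⟪ν, fderiv ℝ γ (t, x) w⟫ = 0)
    (hne : ⟪u (τ (t, x), γ (t, x)), ν⟫ ≠ 0) :
    ∀ w : ℝ × E3,
      fderiv ℝ τ (t, x) w
        = - ⟪ν, fderiv ℝ (fun q : ℝ × E3 => η q.1 (τ (t, x)) q.2) (t, x) w⟫
            / ⟪u (τ (t, x), γ (t, x)), ν⟫ := by
  intro w
  have hγ : (fun q : ℝ × E3 => η q.1 (τ q) q.2) =ᶠ[nhds (t, x)] γ :=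
    Filter.eventually_of_mem (hO.mem_nhds hp) hrel
  have hvelocity : HasDerivAt (fun s => η t s x) (u (τ (t, x), γ (t, x))) (τ (t, x)) := by
    simpa only [hrel _ hp] using hflow t (τ (t, x)) x
  have hchain := fderiv_comp_middle_apply (H := fun p : ℝ × ℝ × E3 => η p.1 p.2.1 p.2.2)
    ((hη.differentiable one_ne_zero) _) (hτ _ hp) hvelocity w
  rw [hγ.fderiv_eq] at hchain
  exact eq_neg_inner_div_of_inner_add_smul_eq_zero (hchain ▸ hν w) hne

/-- If `η(t, τ(t,x); x) = γ(t,x)` on an open set `O`, where `η` is `C¹` and satisfies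
`∂_{t₂}η = u(t₂, η)`, and `ν` annihilates the range of `Dγ(t,x)` with
`u(τ(t,x),γ(t,x)) · ν ≠ 0`, then
`Dτ(t,x)(w) = − (ν · (A w)) / (u(τ(t,x),γ(t,x)) · ν)` where `A` is the derivative at
`(t,x)` of `(t',x') ↦ η(t', s; x')` with the middle argument frozen at `s = τ(t,x)`. -/
theorem derivative_of_tau_formula
    (u : ℝ × E3 → E3) (hu : Continuous u)
    (η : ℝ → ℝ → E3 → E3)
    (hη : ContDiff ℝ 1 (fun p : ℝ × ℝ × E3 => η p.1 p.2.1 p.2.2))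
    (hflow : ∀ t₁ t₂ x, HasDerivAt (fun s => η t₁ s x) (u (t₂, η t₁ t₂ x)) t₂)
    (O : Set (ℝ × E3)) (hO : IsOpen O)
    (τ : ℝ × E3 → ℝ) (γ : ℝ × E3 → E3)
    (hτ : ∀ p ∈ O, DifferentiableAt ℝ τ p)
    (hγ : ∀ p ∈ O, DifferentiableAt ℝ γ p)
    (hrel : ∀ p ∈ O, η p.1 (τ p) p.2 = γ p)
    (t : ℝ) (x : E3) (hp : (t, x) ∈ O)
    (ν : E3)
    (hν : ∀ w : ℝ × E3, ⟪ν, fderiv ℝ γ (t, x) w⟫ = 0)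
    (hne : ⟪u (τ (t, x), γ (t, x)), ν⟫ ≠ 0) :
    ∀ w : ℝ × E3,
      fderiv ℝ τ (t, x) w
        = - ⟪ν, fderiv ℝ (fun q : ℝ × E3 => η q.1 (τ (t, x)) q.2) (t, x) w⟫
            / ⟪u (τ (t, x), γ (t, x)), ν⟫ :=
  derivative_of_tau_formula_general u η hη hflow O hO τ γ hτ hrel t x hp ν hν hne
end
end
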